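/- arXiv:2107.07715 — 3 statements merged into one kernel-verified Lean document; each statement's English description precedes it below -/
import Mathlib

section
/- Let φ be a convex path in ℝ² and suppose points p, q, r occur in this order along φ. If q lies in the open segment (p,r), then the closed segment [p,r] is contained in the image of φ. -/
open Set

noncomputable section

/-- `N` is a norm on the real vector space `E`. -/
structure IsNorm {E : Type*} [AddCommGroup E] [Module ℝ E] (N : E → ℝ) : Prop where
  eq_zero_iff : ∀ v : E, N v = 0 ↔ v = 0
  smul_eq : ∀ (c : ℝ) (v : E), N (c • v) = |c| * N v
  add_le : ∀ u v : E, N (u + v) ≤ N u + N v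

/-- Length of the path `φ` on `[a, b]`, with respect to the (norm) function `N`:
the supremum over partitions `a = t 0 ≤ ⋯ ≤ t n = b` of the sums of distances. -/
noncomputable def pathLen {E : Type*} [AddCommGroup E] [Module ℝ E] (N : E → ℝ)
    (φ : ℝ → E) (a b : ℝ) : ENNReal :=
  ⨆ (n : ℕ) (t : Fin (n + 1) → ℝ) (_ : Monotone t) (_ : t 0 = a)
    (_ : t (Fin.last n) = b),
    ∑ i : Fin n, ENNReal.ofReal (N (φ (t i.succ) - φ (t i.castSucc)))

/-- `φ` is a parametrization of the boundary loop of `B ⊆ ℝ² = ℂ`. -/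
def IsBoundaryParam (B : Set ℂ) (φ : ℝ → ℂ) : Prop :=
  Continuous φ ∧ (∀ t : ℝ, φ (t + 1) = φ t) ∧ Set.InjOn φ (Set.Ico 0 1) ∧
    φ '' Set.Ico 0 1 = frontier B

/-- A convex body in the plane: compact, convex, with nonempty interior. -/
def IsConvexBody (B : Set ℂ) : Prop :=
  IsCompact B ∧ Convex ℝ B ∧ (interior B).Nonempty

/-- `C` is a convex arc from `u` to `v`: either the segment `[u, v]`, or a set whose
union with the segment `[v, u]` is the boundary of a convex body (meeting the
segment only at the endpoints). -/
def IsConvexArc (C : Set ℂ) (u v : ℂ) : Prop :=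
  u ∈ C ∧ v ∈ C ∧
    (C = segment ℝ u v ∨
      ∃ B : Set ℂ, IsConvexBody B ∧ C ∪ segment ℝ v u = frontier B ∧
        C ∩ segment ℝ v u = {u, v})

/-- `φ` is a convex path from `u` to `v`, parametrized on `[0, 1]`. -/
def IsConvexPath (φ : ℝ → ℂ) (u v : ℂ) : Prop :=
  Continuous φ ∧ φ 0 = u ∧ φ 1 = v ∧ Set.InjOn φ (Set.Icc 0 1) ∧
    IsConvexArc (φ '' Set.Icc 0 1) u v

set_option maxHeartbeats 1600000

/-- If `p`, `q`, `r` occur in this order along a convex path and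
`q ∈ (p, r)`, then `[p, r]` is contained in the path. -/
theorem stmt8 (φ : ℝ → ℂ) (u v : ℂ) (hφ : IsConvexPath φ u v)
    (p q r : ℂ) (t₁ t₂ t₃ : ℝ)
    (ht₁ : t₁ ∈ Set.Icc (0 : ℝ) 1) (ht₂ : t₂ ∈ Set.Icc (0 : ℝ) 1)
    (ht₃ : t₃ ∈ Set.Icc (0 : ℝ) 1) (h12 : t₁ ≤ t₂) (h23 : t₂ ≤ t₃)
    (hp : φ t₁ = p) (hq : φ t₂ = q) (hr : φ t₃ = r)
    (hmid : q ∈ openSegment ℝ p r) :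
    segment ℝ p r ⊆ φ '' Set.Icc 0 1 := by
  obtain ⟨hcont, hu0, hv1, hinj, huC, hvC, harc⟩ := hφ
  intro x hx
  by_cases hpr : p = r
  · subst hpr
    rw [segment_same, Set.mem_singleton_iff] at hx
    exact ⟨t₁, ht₁, hp.trans hx.symm⟩
  have hpC : p ∈ φ '' Set.Icc 0 1 := ⟨t₁, ht₁, hp⟩
  have hqC : q ∈ φ '' Set.Icc 0 1 := ⟨t₂, ht₂, hq⟩
  have hrC : r ∈ φ '' Set.Icc 0 1 := ⟨t₃, ht₃, hr⟩
  rcases harc with hseg | ⟨B, ⟨hBcomp, hBconv, hBint⟩, hunion, hinter⟩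
  · rw [hseg] at hpC hrC ⊢
    exact (convex_segment u v).segment_subset hpC hrC hx
  by_cases hxC : x ∈ φ '' Set.Icc 0 1
  · exact hxC
  exfalso
  have hBclosed : IsClosed B := hBcomp.isClosed
  have hCfr : φ '' Set.Icc 0 1 ⊆ frontier B := hunion ▸ Set.subset_union_left
  have hfrB : frontier B ⊆ B := hBclosed.frontier_subset
  have hpB : p ∈ B := hfrB (hCfr hpC)
  have hqB : q ∈ B := hfrB (hCfr hqC)
  have hrB : r ∈ B := hfrB (hCfr hrC)
  have huB : u ∈ B := hfrB (hCfr huC)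
  have hvB : v ∈ B := hfrB (hCfr hvC)
  -- supporting functional at any non-interior point
  have hsupport : ∀ z : ℂ, z ∉ interior B → ∃ F : ℂ →L[ℝ] ℝ,
      (∀ a ∈ interior B, F a < F z) ∧ ∀ y ∈ B, F y ≤ F z := by
    intro z hz
    obtain ⟨F, hF⟩ := geometric_hahn_banach_open_point hBconv.interior isOpen_interior hz
    refine ⟨F, hF, fun y hy => ?_⟩
    obtain ⟨o, ho⟩ := hBint
    have h1 : openSegment ℝ y o ⊆ interior B :=
      hBconv.openSegment_self_interior_subset_interior hy ho
    have h2 : y ∈ closure (openSegment ℝ y o) :=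
      segment_subset_closure_openSegment (left_mem_segment ℝ y o)
    have h3 : closure (openSegment ℝ y o) ⊆ {w : ℂ | F w ≤ F z} :=
      closure_minimal (fun a ha => (hF a (h1 ha)).le)
        (isClosed_le F.continuous continuous_const)
    exact h3 h2
  have hqint : q ∉ interior B := by
    have h := hCfr hqC
    rw [hBclosed.frontier_eq] at h
    exact h.2
  obtain ⟨f, hflt, hfle⟩ := hsupport q hqint
  rw [openSegment_eq_image'] at hmid
  obtain ⟨s, hs01, hq_eq⟩ := hmid
  simp only [] at hq_eq
  have hfcombo : ∀ (F : ℂ →L[ℝ] ℝ) (y z : ℂ) (k : ℝ), F (y + k • z) = F y + k * F z := by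
    intro F y z k
    rw [map_add, map_smul, smul_eq_mul]
  have hfp_le : f p ≤ f q := hfle p hpB
  have hfr_le : f r ≤ f q := hfle r hrB
  have hkey : f q = f p + s * (f r - f p) := by
    rw [← hq_eq, hfcombo f p (r - p) s, map_sub]
  have hfp : f p = f q := by
    refine le_antisymm hfp_le ?_
    nlinarith [hs01.1, hs01.2, mul_nonneg hs01.1.le (sub_nonneg.mpr hfr_le)]
  have hfr : f r = f q := by
    refine le_antisymm hfr_le ?_
    nlinarith [hs01.1, hs01.2, mul_nonneg hs01.1.le (sub_nonneg.mpr hfp_le)]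
  set d : ℂ := r - p with hd_def
  have hd : d ≠ 0 := sub_ne_zero.mpr (Ne.symm hpr)
  set e : ℂ := Complex.I * d with he_def
  have decomp : ∀ w : ℂ, w = ((w / d).im : ℝ) • e + ((w / d).re : ℝ) • d := by
    intro w
    have h1 : (w / d) * d = w := div_mul_cancel₀ w hd
    calc w = (w / d) * d := h1.symm
      _ = (((w / d).re : ℂ) + ((w / d).im : ℂ) * Complex.I) * d := by
          rw [Complex.re_add_im]
      _ = ((w / d).im : ℝ) • e + ((w / d).re : ℝ) • d := by
          simp only [he_def, Complex.real_smul]; ring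
  have haff : ∀ (F : ℂ →L[ℝ] ℝ) (y : ℂ),
      F y = F p + ((y - p) / d).im * F e + ((y - p) / d).re * F d := by
    intro F y
    have h1 : F y = F p + F (y - p) := by rw [map_sub]; ring
    have h2 : F (y - p) = ((y - p) / d).im * F e + ((y - p) / d).re * F d := by
      conv_lhs => rw [decomp (y - p)]
      rw [map_add, map_smul, map_smul, smul_eq_mul, smul_eq_mul]
    rw [h1, h2]; ring
  have hrep : ∀ z : ℂ, z = p + (((z - p) / d).im • e + ((z - p) / d).re • d) := by
    intro z
    have h := decomp (z - p)
    have h2 : p + (z - p) = z := by ring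
    rw [h] at h2
    exact h2.symm
  have hκd : ∀ k : ℝ, ((k • d : ℂ) / d).re = k ∧ ((k • d : ℂ) / d).im = 0 := by
    intro k
    rw [Complex.real_smul, mul_div_assoc, div_self hd, mul_one]
    exact ⟨Complex.ofReal_re k, Complex.ofReal_im k⟩
  have hcoord : ∀ k k' : ℝ, p + k • d = p + k' • d → k = k' := by
    intro k k' h
    have h2 : (k - k') • d = 0 := by
      rw [sub_smul, sub_eq_zero]
      exact add_left_cancel h
    rcases smul_eq_zero.mp h2 with h3 | h3
    · exact sub_eq_zero.mp h3
    · exact absurd h3 hd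
  have hfd : f d = 0 := by
    rw [hd_def, map_sub, hfr, hfp, sub_self]
  have hfe : f e ≠ 0 := by
    intro h0
    obtain ⟨o, ho⟩ := hBint
    have h1 := haff f o
    rw [h0, hfd, mul_zero, mul_zero, add_zero, add_zero] at h1
    have h2 := hflt o ho
    rw [h1, hfp] at h2
    exact lt_irrefl _ h2
  have hfline : ∀ k : ℝ, f (p + k • d) = f q := by
    intro k
    rw [hfcombo f p d k, hfd, mul_zero, add_zero, hfp]
  have hline : ∀ y : ℂ, f y = f q → y = p + ((y - p) / d).re • d := by
    intro y hy
    have h1 := haff f y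
    rw [hfd, mul_zero, add_zero, hfp, hy] at h1
    have h2 : ((y - p) / d).im = 0 := by
      have h3 : ((y - p) / d).im * f e = 0 := by linarith
      rcases mul_eq_zero.mp h3 with h | h
      · exact h
      · exact absurd h hfe
    have h4 := decomp (y - p)
    rw [h2] at h4
    simp only [Complex.ofReal_zero, zero_smul, zero_add] at h4
    exact sub_eq_iff_eq_add'.mp h4
  have hfrontmem : ∀ y : ℂ, y ∈ B → f y = f q → y ∈ frontier B := by
    intro y hyB hyf
    rw [hBclosed.frontier_eq]
    exact ⟨hyB, fun hyint => absurd hyf (ne_of_lt (hflt y hyint))⟩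
  -- coordinates of x
  rw [segment_eq_image'] at hx
  obtain ⟨ξ, hξmem, hx_eq⟩ := hx
  simp only [] at hx_eq
  rw [← hd_def] at hx_eq
  have hξ0 : 0 < ξ := by
    rcases eq_or_lt_of_le hξmem.1 with h | h
    · exfalso; apply hxC; rw [← hx_eq, ← h]; simpa using hpC
    · exact h
  have hξ1 : ξ < 1 := by
    rcases eq_or_lt_of_le hξmem.2 with h | h
    · exfalso; apply hxC; rw [← hx_eq, h]
      have h2 : p + (1:ℝ) • d = r := by rw [hd_def]; simp
      rw [h2]; exact hrC
    · exact h
  have hxB : x ∈ B := by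
    rw [← hx_eq, hd_def]
    exact hBconv.segment_subset hpB hrB
      (by rw [segment_eq_image']; exact ⟨ξ, hξmem, rfl⟩)
  have hxfr : x ∈ frontier B := by
    rw [← hx_eq]
    exact hfrontmem _ (hx_eq ▸ hxB) (hfline ξ)
  have hκx : ((x - p) / d).re = ξ := by
    rw [← hx_eq, add_sub_cancel_left]
    exact (hκd ξ).1
  have hx_vu : x ∈ segment ℝ v u := by
    have h := hxfr
    rw [← hunion] at h
    rcases h with h | h
    · exact absurd h hxC
    · exact h
  have huv : u ≠ v := by
    intro h
    rw [h, segment_same, Set.mem_singleton_iff] at hx_vu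
    exact hxC (hx_vu ▸ hvC)
  rw [segment_eq_image'] at hx_vu
  obtain ⟨β, hβmem, hxvu_eq⟩ := hx_vu
  simp only [] at hxvu_eq
  have hβ0 : 0 < β := by
    rcases eq_or_lt_of_le hβmem.1 with h | h
    · exfalso; apply hxC; rw [← hxvu_eq, ← h]; simpa using hvC
    · exact h
  have hβ1 : β < 1 := by
    rcases eq_or_lt_of_le hβmem.2 with h | h
    · exfalso; apply hxC; rw [← hxvu_eq, h]
      have h2 : v + (1:ℝ) • (u - v) = u := by simp
      rw [h2]; exact huC
    · exact h
  have hfv_le : f v ≤ f q := hfle v hvB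
  have hfu_le : f u ≤ f q := hfle u huB
  have hfx : f x = f q := by rw [← hx_eq]; exact hfline ξ
  have hfx2 : f x = f v + β * (f u - f v) := by
    rw [← hxvu_eq, hfcombo f v (u - v) β, map_sub]
  have hfu : f u = f q := by
    refine le_antisymm hfu_le ?_
    nlinarith [hβ0, hβ1, mul_nonneg hβ0.le (sub_nonneg.mpr hfv_le)]
  have hfv : f v = f q := by
    refine le_antisymm hfv_le ?_
    nlinarith [hβ0, hβ1, mul_nonneg hβ0.le (sub_nonneg.mpr hfu_le)]
  have hu_rep := hline u hfu
  have hv_rep := hline v hfv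
  set ku : ℝ := ((u - p) / d).re with hku_def
  set kv : ℝ := ((v - p) / d).re with hkv_def
  have hx_rep2 : p + (kv + β * (ku - kv)) • d = x := by
    rw [← hxvu_eq]
    conv_rhs => rw [hu_rep, hv_rep]
    simp only [Complex.real_smul]
    push_cast
    ring
  have hξ_eq : kv + β * (ku - kv) = ξ := hcoord _ _ (hx_rep2.trans hx_eq.symm)
  have hkuv : ku ≠ kv := by
    intro h
    apply huv
    rw [hu_rep, hv_rep, h]
  have hr_rep : r = p + (1:ℝ) • d := by rw [hd_def]; simp
  -- the three-point lemma
  have mid3 : ∀ w₁ w₂ w₃ : ℂ, w₁ ∈ frontier B → w₂ ∈ frontier B → w₃ ∈ frontier B →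
      ∀ η : ℝ, 0 < η → η < 1 →
      ((w₁ - p) / d).re = η → ((w₂ - p) / d).re = η → ((w₃ - p) / d).re = η →
      ((w₁ - p) / d).im < ((w₂ - p) / d).im → ((w₂ - p) / d).im < ((w₃ - p) / d).im →
      False := by
    intro w₁ w₂ w₃ hw1 hw2 hw3 η hη0 hη1 hk1 hk2 hk3 hs12 hs23
    have hw2i : w₂ ∉ interior B := by
      have h := hw2
      rw [hBclosed.frontier_eq] at h
      exact h.2
    obtain ⟨F, hFlt, hFle⟩ := hsupport w₂ hw2i
    have e1 := haff F w₁
    have e2 := haff F w₂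
    have e3 := haff F w₃
    rw [hk1] at e1
    rw [hk2] at e2
    rw [hk3] at e3
    have hle1 : F w₁ ≤ F w₂ := hFle w₁ (hfrB hw1)
    have hle3 : F w₃ ≤ F w₂ := hFle w₃ (hfrB hw3)
    have h01 : ((w₁ - p) / d).im * F e ≤ ((w₂ - p) / d).im * F e := by linarith
    have h02 : ((w₃ - p) / d).im * F e ≤ ((w₂ - p) / d).im * F e := by linarith
    have hFe : F e = 0 := by
      rcases lt_trichotomy (F e) 0 with h | h | h
      · exfalso
        have := mul_lt_mul_of_neg_right hs12 h
        linarith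
      · exact h
      · exfalso
        have := mul_lt_mul_of_pos_right hs23 h
        linarith
    rw [hFe, mul_zero, add_zero] at e2
    have hFr2 := haff F r
    have hrd : (r - p) / d = 1 := by rw [← hd_def, div_self hd]
    rw [hrd, Complex.one_re, Complex.one_im, zero_mul, add_zero, one_mul] at hFr2
    have hFp_le2 : F p ≤ F w₂ := hFle p hpB
    have hFr_le2 : F r ≤ F w₂ := hFle r hrB
    have h03 : 0 ≤ η * F d := by linarith
    have h04 : F d ≤ η * F d := by linarith
    have hFd : F d = 0 := by
      rcases lt_trichotomy (F d) 0 with h | h | h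
      · exfalso
        have := mul_neg_of_pos_of_neg hη0 h
        linarith
      · exact h
      · exfalso
        have := mul_lt_mul_of_pos_right hη1 h
        rw [one_mul] at this
        linarith
    obtain ⟨o, ho⟩ := hBint
    have eo := haff F o
    rw [hFe, hFd, mul_zero, mul_zero, add_zero, add_zero] at eo
    rw [hFd, mul_zero, add_zero] at e2
    have hcontra := hFlt o ho
    rw [eo, e2] at hcontra
    exact lt_irrefl _ hcontra
  have two_point : ∀ η : ℝ, 0 < η → η < 1 → ∀ z₁ z₂ z₃ : ℂ,
      z₁ ∈ frontier B → z₂ ∈ frontier B → z₃ ∈ frontier B →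
      ((z₁ - p) / d).re = η → ((z₂ - p) / d).re = η → ((z₃ - p) / d).re = η →
      z₁ ≠ z₂ → z₁ ≠ z₃ → z₂ ≠ z₃ → False := by
    intro η hη0 hη1 z₁ z₂ z₃ h1 h2 h3 k1 k2 k3 n12 n13 n23
    have key : ∀ zi zj : ℂ, ((zi - p) / d).re = η → ((zj - p) / d).re = η →
        ((zi - p) / d).im = ((zj - p) / d).im → zi = zj := by
      intro zi zj ki kj hij
      rw [hrep zi, hrep zj, ki, kj, hij]
    have m12 : ((z₁ - p) / d).im ≠ ((z₂ - p) / d).im := fun h => n12 (key _ _ k1 k2 h)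
    have m13 : ((z₁ - p) / d).im ≠ ((z₃ - p) / d).im := fun h => n13 (key _ _ k1 k3 h)
    have m23 : ((z₂ - p) / d).im ≠ ((z₃ - p) / d).im := fun h => n23 (key _ _ k2 k3 h)
    rcases lt_trichotomy (((z₁ - p) / d).im) (((z₂ - p) / d).im) with a | a | a
    · rcases lt_trichotomy (((z₂ - p) / d).im) (((z₃ - p) / d).im) with b | b | b
      · exact mid3 z₁ z₂ z₃ h1 h2 h3 η hη0 hη1 k1 k2 k3 a b
      · exact m23 b
      · rcases lt_trichotomy (((z₁ - p) / d).im) (((z₃ - p) / d).im) with c | c | c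
        · exact mid3 z₁ z₃ z₂ h1 h3 h2 η hη0 hη1 k1 k3 k2 c b
        · exact m13 c
        · exact mid3 z₃ z₁ z₂ h3 h1 h2 η hη0 hη1 k3 k1 k2 c a
    · exact m12 a
    · rcases lt_trichotomy (((z₁ - p) / d).im) (((z₃ - p) / d).im) with c | c | c
      · exact mid3 z₂ z₁ z₃ h2 h1 h3 η hη0 hη1 k2 k1 k3 a c
      · exact m13 c
      · rcases lt_trichotomy (((z₂ - p) / d).im) (((z₃ - p) / d).im) with b | b | b
        · exact mid3 z₂ z₃ z₁ h2 h3 h1 η hη0 hη1 k2 k3 k1 b c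
        · exact m23 b
        · exact mid3 z₃ z₂ z₁ h3 h2 h1 η hη0 hη1 k3 k2 k1 b a
  have hGcont : Continuous fun t : ℝ => ((φ t - p) / d).re :=
    Complex.continuous_re.comp ((hcont.sub continuous_const).div_const d)
  have hG1 : ((φ t₁ - p) / d).re = 0 := by rw [hp]; simp
  have hG3 : ((φ t₃ - p) / d).re = 1 := by
    rw [hr, ← hd_def, div_self hd, Complex.one_re]
  have hG0 : ((φ 0 - p) / d).re = ku := by rw [hu0]
  have hGlast : ((φ 1 - p) / d).re = kv := by rw [hv1]
  rcases lt_or_gt_of_ne hkuv with hAB | hAB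
  · -- CASE B : ku < kv
    have hξku : ku < ξ := by nlinarith [hξ_eq, hβ0, hβ1]
    have hξkv : ξ < kv := by nlinarith [hξ_eq, hβ0, hβ1]
    have hne' : kv - ku ≠ 0 := ne_of_gt (sub_pos.mpr hAB)
    have hsq : s ≤ ku ∨ kv ≤ s := by
      by_contra hcon
      push_neg at hcon
      obtain ⟨hsku, hskv⟩ := hcon
      have hθmem : (s - ku) / (kv - ku) ∈ Set.Icc (0:ℝ) 1 :=
        ⟨div_nonneg (by linarith) (by linarith),
         (div_le_one (sub_pos.mpr hAB)).mpr (by linarith)⟩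
      have hcne : ((kv : ℂ)) - (ku : ℂ) ≠ 0 := by
        exact_mod_cast hne'
      have hq_seg : q ∈ segment ℝ v u := by
        rw [segment_symm, segment_eq_image']
        refine ⟨(s - ku) / (kv - ku), hθmem, ?_⟩
        rw [← hq_eq]
        conv_lhs => rw [hu_rep, hv_rep]
        simp only [Complex.real_smul]
        push_cast
        field_simp
        ring
      have hq_mem : q ∈ ({u, v} : Set ℂ) := by
        rw [← hinter]; exact ⟨hqC, hq_seg⟩
      rcases hq_mem with h | h
      · have hsk : s = ku := hcoord s ku ((hq_eq.trans h).trans hu_rep)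
        linarith
      · rw [Set.mem_singleton_iff] at h
        have hsk : s = kv := hcoord s kv ((hq_eq.trans h).trans hv_rep)
        linarith
    rcases hsq with hsku | hskv
    · -- B1 : s ≤ ku
      have hsku' : s < ku := by
        rcases eq_or_lt_of_le hsku with h | h
        · exfalso
          have hqu : q = u := by rw [← hq_eq, h]; exact hu_rep.symm
          have ht20 : t₂ = 0 := by
            apply hinj ht₂ (⟨le_refl 0, zero_le_one⟩ : (0:ℝ) ∈ Set.Icc (0:ℝ) 1)
            rw [hq, hu0]; exact hqu
          have ht10 : t₁ = 0 := le_antisymm (ht20 ▸ h12) ht₁.1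
          have hpu : p = u := by rw [← hp, ht10, hu0]
          have hku0 : ku = 0 := hcoord ku 0 (by rw [← hu_rep, ← hpu]; simp)
          rw [h, hku0] at hs01
          exact lt_irrefl _ hs01.1
        · exact h
      have ht1pos : 0 < t₁ := by
        rcases eq_or_lt_of_le ht₁.1 with h | h
        · exfalso
          have hpu : p = u := by rw [← hp, ← h, hu0]
          have hku0 : ku = 0 := hcoord ku 0 (by rw [← hu_rep, ← hpu]; simp)
          linarith [hs01.1]
        · exact h
      have ht1t2 : t₁ < t₂ := by
        rcases eq_or_lt_of_le h12 with h | h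
        · exfalso
          have hpq : p = q := by rw [← hp, h, hq]
          have hs0 : (0:ℝ) = s := hcoord 0 s (by rw [hq_eq, ← hpq]; simp)
          linarith [hs01.1]
        · exact h
      have hyC : ∀ η : ℝ, η ∈ Set.Icc s ku → (p + η • d) ∈ φ '' Set.Icc 0 1 := by
        intro η hη
        have hne2 : ku - s ≠ 0 := ne_of_gt (sub_pos.mpr hsku')
        have hcne2 : ((ku : ℂ)) - (s : ℂ) ≠ 0 := by exact_mod_cast hne2
        have hyB : p + η • d ∈ B := by
          have hmem : p + η • d ∈ segment ℝ q u := by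
            rw [segment_eq_image']
            refine ⟨(η - s) / (ku - s),
              ⟨div_nonneg (by linarith [hη.1]) (by linarith),
               (div_le_one (sub_pos.mpr hsku')).mpr (by linarith [hη.2])⟩, ?_⟩
            rw [← hq_eq]
            conv_lhs => rw [hu_rep]
            simp only [Complex.real_smul]
            push_cast
            field_simp
            ring
          exact hBconv.segment_subset hqB huB hmem
        have hyfr : p + η • d ∈ frontier B := hfrontmem _ hyB (hfline η)
        rw [← hunion] at hyfr
        rcases hyfr with h | h
        · exact h
        · rw [segment_eq_image'] at h
          obtain ⟨θ, hθmem2, hθeq⟩ := h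
          simp only [] at hθeq
          have hco : kv + θ * (ku - kv) = η := by
            apply hcoord
            rw [← hθeq]
            conv_rhs => rw [hu_rep, hv_rep]
            simp only [Complex.real_smul]
            push_cast
            ring
          have hθge : 1 ≤ θ := by nlinarith [hη.2]
          have hθ1 : θ = 1 := le_antisymm hθmem2.2 hθge
          rw [hθ1] at hθeq
          have hres : p + η • d = u := by rw [← hθeq]; simp
          rw [hres]
          exact huC
      have hch : ∀ η : Set.Icc s ku, ∃ t, t ∈ Set.Icc (0:ℝ) 1 ∧ φ t = p + (η : ℝ) • d := by
        intro η
        obtain ⟨t, htm, hte⟩ := hyC (η : ℝ) η.2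
        exact ⟨t, htm, hte⟩
      set τ1 : Set.Icc s ku → Set.Icc (0:ℝ) 1 :=
        fun η => ⟨(hch η).choose, (hch η).choose_spec.1⟩ with hτ1_def
      have hτ1φ : ∀ η : Set.Icc s ku, φ ((τ1 η) : ℝ) = p + (η : ℝ) • d :=
        fun η => (hch η).choose_spec.2
      have hemb : Topology.IsEmbedding (fun t : Set.Icc (0:ℝ) 1 => φ (t : ℝ)) :=
        ((hcont.comp continuous_subtype_val).isClosedEmbedding
          (fun a b hab => Subtype.ext (hinj a.2 b.2 hab))).toIsEmbedding
      have hτ1cont : Continuous τ1 := by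
        rw [hemb.continuous_iff]
        have hco : (fun t : Set.Icc (0:ℝ) 1 => φ (t : ℝ)) ∘ τ1
            = fun η : Set.Icc s ku => p + (η : ℝ) • d := by
          funext η; exact hτ1φ η
        rw [hco]
        exact continuous_const.add (continuous_subtype_val.smul continuous_const)
      set τ : ℝ → ℝ := fun η => ((τ1 (Set.projIcc s ku hsku'.le η)) : ℝ) with hτ_def
      have hτcont : Continuous τ :=
        continuous_subtype_val.comp (hτ1cont.comp continuous_projIcc)
      have hτmem : ∀ η : ℝ, τ η ∈ Set.Icc (0:ℝ) 1 := fun η => (τ1 _).2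
      have hτφ : ∀ η : ℝ, η ∈ Set.Icc s ku → φ (τ η) = p + η • d := by
        intro η hη
        rw [hτ_def]
        simp only [Set.projIcc_of_mem hsku'.le hη]
        exact hτ1φ ⟨η, hη⟩
      have hτs : τ s = t₂ := by
        apply hinj (hτmem s) ht₂
        rw [hτφ s ⟨le_refl s, hsku'.le⟩, hq_eq, hq]
      have hτku : τ ku = 0 := by
        apply hinj (hτmem ku) (⟨le_refl 0, zero_le_one⟩ : (0:ℝ) ∈ Set.Icc (0:ℝ) 1)
        rw [hτφ ku ⟨hsku'.le, le_refl ku⟩, ← hu_rep, hu0]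
      have hiv : t₁ ∈ Set.Ioo (τ ku) (τ s) := by
        rw [hτku, hτs]; exact ⟨ht1pos, ht1t2⟩
      obtain ⟨η, hηmem, hηeq⟩ := intermediate_value_Ioo' hsku'.le hτcont.continuousOn hiv
      have h1 : φ t₁ = p + η • d := by
        rw [← hηeq]; exact hτφ η ⟨hηmem.1.le, hηmem.2.le⟩
      have h2 : (0:ℝ) = η := hcoord 0 η (by rw [← h1, hp]; simp)
      linarith [hηmem.1, hs01.1]
    · -- B2 : kv ≤ s
      have hskv' : kv < s := by
        rcases eq_or_lt_of_le hskv with h | h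
        · exfalso
          have hqv : q = v := by rw [← hq_eq, ← h]; exact hv_rep.symm
          have ht21 : t₂ = 1 := by
            apply hinj ht₂ (⟨zero_le_one, le_refl 1⟩ : (1:ℝ) ∈ Set.Icc (0:ℝ) 1)
            rw [hq, hv1]; exact hqv
          have ht31 : t₃ = 1 := le_antisymm ht₃.2 (ht21 ▸ h23)
          have hrv : r = v := by rw [← hr, ht31, hv1]
          have hkv1 : kv = 1 := by
            have := hcoord kv 1 (by rw [← hv_rep, ← hrv, hr_rep])
            exact this
          rw [← h, hkv1] at hs01
          exact lt_irrefl _ hs01.2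
        · exact h
      have ht2t3 : t₂ < t₃ := by
        rcases eq_or_lt_of_le h23 with h | h
        · exfalso
          have hqr : q = r := by rw [← hq, h, hr]
          have hs1 : s = 1 := hcoord s 1 (by rw [hq_eq, hqr, hr_rep])
          linarith [hs01.2]
        · exact h
      have ht3lt1 : t₃ < 1 := by
        rcases eq_or_lt_of_le ht₃.2 with h | h
        · exfalso
          have hrv : r = v := by rw [← hr, h, hv1]
          have hkv1 : kv = 1 := hcoord kv 1 (by rw [← hv_rep, ← hrv, hr_rep])
          linarith [hs01.2]
        · exact h
      have hyC : ∀ η : ℝ, η ∈ Set.Icc kv s → (p + η • d) ∈ φ '' Set.Icc 0 1 := by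
        intro η hη
        have hne2 : s - kv ≠ 0 := ne_of_gt (sub_pos.mpr hskv')
        have hcne2 : ((s : ℂ)) - (kv : ℂ) ≠ 0 := by exact_mod_cast hne2
        have hyB : p + η • d ∈ B := by
          have hmem : p + η • d ∈ segment ℝ v q := by
            rw [segment_eq_image']
            refine ⟨(η - kv) / (s - kv),
              ⟨div_nonneg (by linarith [hη.1]) (by linarith),
               (div_le_one (sub_pos.mpr hskv')).mpr (by linarith [hη.2])⟩, ?_⟩
            rw [← hq_eq]
            conv_lhs => rw [hv_rep]
            simp only [Complex.real_smul]
            push_cast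
            field_simp
            ring
          exact hBconv.segment_subset hvB hqB hmem
        have hyfr : p + η • d ∈ frontier B := hfrontmem _ hyB (hfline η)
        rw [← hunion] at hyfr
        rcases hyfr with h | h
        · exact h
        · rw [segment_eq_image'] at h
          obtain ⟨θ, hθmem2, hθeq⟩ := h
          simp only [] at hθeq
          have hco : kv + θ * (ku - kv) = η := by
            apply hcoord
            rw [← hθeq]
            conv_rhs => rw [hu_rep, hv_rep]
            simp only [Complex.real_smul]
            push_cast
            ring
          have hθle : θ ≤ 0 := by nlinarith [hη.1]
          have hθ0 : θ = 0 := le_antisymm hθle hθmem2.1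
          rw [hθ0] at hθeq
          have hres : p + η • d = v := by rw [← hθeq]; simp
          rw [hres]
          exact hvC
      have hch : ∀ η : Set.Icc kv s, ∃ t, t ∈ Set.Icc (0:ℝ) 1 ∧ φ t = p + (η : ℝ) • d := by
        intro η
        obtain ⟨t, htm, hte⟩ := hyC (η : ℝ) η.2
        exact ⟨t, htm, hte⟩
      set τ1 : Set.Icc kv s → Set.Icc (0:ℝ) 1 :=
        fun η => ⟨(hch η).choose, (hch η).choose_spec.1⟩ with hτ1_def
      have hτ1φ : ∀ η : Set.Icc kv s, φ ((τ1 η) : ℝ) = p + (η : ℝ) • d :=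
        fun η => (hch η).choose_spec.2
      have hemb : Topology.IsEmbedding (fun t : Set.Icc (0:ℝ) 1 => φ (t : ℝ)) :=
        ((hcont.comp continuous_subtype_val).isClosedEmbedding
          (fun a b hab => Subtype.ext (hinj a.2 b.2 hab))).toIsEmbedding
      have hτ1cont : Continuous τ1 := by
        rw [hemb.continuous_iff]
        have hco : (fun t : Set.Icc (0:ℝ) 1 => φ (t : ℝ)) ∘ τ1
            = fun η : Set.Icc kv s => p + (η : ℝ) • d := by
          funext η; exact hτ1φ η
        rw [hco]
        exact continuous_const.add (continuous_subtype_val.smul continuous_const)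
      set τ : ℝ → ℝ := fun η => ((τ1 (Set.projIcc kv s hskv'.le η)) : ℝ) with hτ_def
      have hτcont : Continuous τ :=
        continuous_subtype_val.comp (hτ1cont.comp continuous_projIcc)
      have hτmem : ∀ η : ℝ, τ η ∈ Set.Icc (0:ℝ) 1 := fun η => (τ1 _).2
      have hτφ : ∀ η : ℝ, η ∈ Set.Icc kv s → φ (τ η) = p + η • d := by
        intro η hη
        rw [hτ_def]
        simp only [Set.projIcc_of_mem hskv'.le hη]
        exact hτ1φ ⟨η, hη⟩
      have hτs : τ s = t₂ := by
        apply hinj (hτmem s) ht₂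
        rw [hτφ s ⟨hskv'.le, le_refl s⟩, hq_eq, hq]
      have hτkv : τ kv = 1 := by
        apply hinj (hτmem kv) (⟨zero_le_one, le_refl 1⟩ : (1:ℝ) ∈ Set.Icc (0:ℝ) 1)
        rw [hτφ kv ⟨le_refl kv, hskv'.le⟩, ← hv_rep, hv1]
      have hiv : t₃ ∈ Set.Ioo (τ s) (τ kv) := by
        rw [hτkv, hτs]; exact ⟨ht2t3, ht3lt1⟩
      obtain ⟨η, hηmem, hηeq⟩ := intermediate_value_Ioo' hskv'.le hτcont.continuousOn hiv
      have h1 : φ t₃ = p + η • d := by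
        rw [← hηeq]; exact hτφ η ⟨hηmem.1.le, hηmem.2.le⟩
      have h2 : (1:ℝ) = η := hcoord 1 η (by rw [← h1, hr, hr_rep])
      linarith [hηmem.2, hs01.2]
  · -- CASE A : kv < ku
    have hξkv : kv < ξ := by nlinarith [hξ_eq, hβ0, hβ1]
    have hξku : ξ < ku := by nlinarith [hξ_eq, hβ0, hβ1]
    have ht1pos : 0 < t₁ := by
      rcases eq_or_lt_of_le ht₁.1 with h | h
      · exfalso
        have hpu : p = u := by rw [← hp, ← h, hu0]
        have hku0 : ku = 0 := hcoord ku 0 (by rw [← hu_rep, ← hpu]; simp)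
        linarith
      · exact h
    have hiv1 : ξ ∈ Set.Ioo (((φ t₁ - p) / d).re) (((φ 0 - p) / d).re) := by
      rw [hG1, hG0]; exact ⟨hξ0, hξku⟩
    obtain ⟨t', ht'mem, ht'G⟩ := intermediate_value_Ioo' ht1pos.le hGcont.continuousOn hiv1
    have hiv2 : ξ ∈ Set.Ioo (((φ t₁ - p) / d).re) (((φ t₃ - p) / d).re) := by
      rw [hG1, hG3]; exact ⟨hξ0, hξ1⟩
    obtain ⟨t'', ht''mem, ht''G⟩ :=
      intermediate_value_Ioo (h12.trans h23) hGcont.continuousOn hiv2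
    have hm1 : t' ∈ Set.Icc (0:ℝ) 1 := ⟨ht'mem.1.le, ht'mem.2.le.trans ht₁.2⟩
    have hm2 : t'' ∈ Set.Icc (0:ℝ) 1 := ⟨ht₁.1.trans ht''mem.1.le, ht''mem.2.le.trans ht₃.2⟩
    have hc1 : φ t' ∈ φ '' Set.Icc 0 1 := ⟨t', hm1, rfl⟩
    have hc2 : φ t'' ∈ φ '' Set.Icc 0 1 := ⟨t'', hm2, rfl⟩
    have hne : φ t' ≠ φ t'' := by
      intro h
      have heq := hinj hm1 hm2 h
      linarith [ht'mem.2, ht''mem.1]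
    exact two_point ξ hξ0 hξ1 (φ t') (φ t'') x (hCfr hc1) (hCfr hc2) hxfr
      ht'G ht''G hκx hne (fun h => hxC (h ▸ hc1)) (fun h => hxC (h ▸ hc2))

end
end

section
/- For any norm X on ℝ², the generalized pi-value satisfies ϖ(X) ≤ 4, where ϖ(X) is half the length of the unit circle of X measured in X itself. -/
open Set

noncomputable section

/-!
Choose `u, v` in the unit ball `B = {N ≤ 1}` maximizing the area `|ω u v|` (Auerbach). Maximality
forces the coordinate functionals `f, g` of the basis `u, v` to satisfy `|f|, |g| ≤ N`, so
`N (x - y) ≤ |f x - f y| + |g x - g y|` and the length of `∂B` is at most the sum of the total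
variations of `f ∘ φ` and `g ∘ φ`. A level line `f = c` with `|c| < 1` passes through the interior
point `c • u` of the convex set `B`, hence meets `∂B` at most twice; integrating the number of
crossings over the levels `c ∈ (-1, 1)` bounds the variation of `f ∘ φ` by `2 · 2 = 4`.
-/

open MeasureTheory

namespace IsNorm

section AddCommGroup

variable {E : Type*} [AddCommGroup E] [Module ℝ E] {N : E → ℝ}

theorem map_zero (hN : IsNorm N) : N 0 = 0 := by
  simpa using hN.smul_eq 0 0

theorem map_neg (hN : IsNorm N) (v : E) : N (-v) = N v := by
  simpa using hN.smul_eq (-1) v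

theorem nonneg (hN : IsNorm N) (v : E) : 0 ≤ N v := by
  have h := hN.add_le v (-v)
  rw [add_neg_cancel, hN.map_zero, hN.map_neg] at h
  linarith

theorem pos (hN : IsNorm N) {v : E} (hv : v ≠ 0) : 0 < N v :=
  (hN.nonneg v).lt_of_ne' (mt (hN.eq_zero_iff v).1 hv)

theorem map_inv_smul_self (hN : IsNorm N) {v : E} (hv : v ≠ 0) : N ((N v)⁻¹ • v) = 1 := by
  rw [hN.smul_eq, abs_inv, abs_of_pos (hN.pos hv), inv_mul_cancel₀ (hN.pos hv).ne']

theorem smul_le_abs (hN : IsNorm N) {u : E} (hu : N u ≤ 1) (c : ℝ) : N (c • u) ≤ |c| := by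
  rw [hN.smul_eq]
  exact mul_le_of_le_one_right (abs_nonneg c) hu

theorem le_abs_add_abs (hN : IsNorm N) {u v : E} (hu : N u ≤ 1) (hv : N v ≤ 1) (a b : ℝ) :
    N (a • u + b • v) ≤ |a| + |b| :=
  (hN.add_le _ _).trans (add_le_add (hN.smul_le_abs hu a) (hN.smul_le_abs hv b))

theorem convexOn (hN : IsNorm N) : ConvexOn ℝ univ N := by
  refine ⟨convex_univ, fun x _ y _ a b ha hb _ => ?_⟩
  calc N (a • x + b • y) ≤ N (a • x) + N (b • y) := hN.add_le _ _
    _ = a • N x + b • N y := by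
      rw [hN.smul_eq, hN.smul_eq, abs_of_nonneg ha, abs_of_nonneg hb, smul_eq_mul, smul_eq_mul]

theorem convex_le_one (hN : IsNorm N) : Convex ℝ {z | N z ≤ 1} := by
  simpa using hN.convexOn.convex_le 1

theorem abs_le_mul (hN : IsNorm N) (f : E →ₗ[ℝ] ℝ) {K : ℝ} (hK : ∀ y, N y ≤ 1 → |f y| ≤ K)
    (z : E) : |f z| ≤ K * N z := by
  rcases eq_or_ne z 0 with rfl | hz
  · simp [hN.map_zero]
  have h := hK _ (hN.map_inv_smul_self hz).le
  rw [map_smul, smul_eq_mul, abs_mul, abs_inv, abs_of_pos (hN.pos hz),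
    inv_mul_le_iff₀ (hN.pos hz)] at h
  linarith

end AddCommGroup

section FiniteDimensional

variable {E : Type*} [NormedAddCommGroup E] [NormedSpace ℝ E] [FiniteDimensional ℝ E]
  {N : E → ℝ}

protected theorem continuous (hN : IsNorm N) : Continuous N :=
  continuousOn_univ.1 (hN.convexOn.continuousOn isOpen_univ)

theorem exists_pos_mul_norm_le (hN : IsNorm N) : ∃ m > 0, ∀ z, m * ‖z‖ ≤ N z := by
  cases subsingleton_or_nontrivial E
  · exact ⟨1, one_pos, fun z => by simp [Subsingleton.elim z 0, hN.map_zero]⟩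
  obtain ⟨w, hw, hmin⟩ := (isCompact_sphere (0 : E) 1).exists_isMinOn
    (NormedSpace.sphere_nonempty.2 zero_le_one) hN.continuous.continuousOn
  have hw0 : w ≠ 0 := ne_zero_of_mem_unit_sphere ⟨w, hw⟩
  refine ⟨N w, hN.pos hw0, fun z => ?_⟩
  rcases eq_or_ne z 0 with rfl | hz
  · simp [hN.map_zero]
  have hz' : 0 < ‖z‖ := norm_pos_iff.2 hz
  have h : N w ≤ N (‖z‖⁻¹ • z) := hmin (by simp [norm_smul, hz'.ne'])
  rw [hN.smul_eq, abs_inv, abs_norm, inv_mul_eq_div, le_div_iff₀ hz'] at h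
  exact h

theorem isClosed_le_one (hN : IsNorm N) : IsClosed {z | N z ≤ 1} :=
  isClosed_le hN.continuous continuous_const

theorem isCompact_le_one (hN : IsNorm N) : IsCompact {z | N z ≤ 1} := by
  obtain ⟨m, hm, hmN⟩ := hN.exists_pos_mul_norm_le
  refine Metric.isCompact_of_isClosed_isBounded hN.isClosed_le_one
    ((Metric.isBounded_closedBall (x := 0) (r := m⁻¹)).subset fun z (hz : N z ≤ 1) => ?_)
  rw [mem_closedBall_zero_iff, ← one_div, le_div_iff₀' hm]
  exact (hmN z).trans hz

theorem mem_interior_le_one (hN : IsNorm N) {z : E} (hz : N z < 1) :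
    z ∈ interior {z | N z ≤ 1} :=
  interior_maximal (fun _ => le_of_lt) (isOpen_lt hN.continuous continuous_const) hz

end FiniteDimensional

end IsNorm

attribute [local instance] Complex.finrank_real_complex_fact

local notation "ω" => Complex.orientation.areaForm

theorem Complex.areaForm_smul_eq_add (u v z : ℂ) : ω u v • z = ω z v • u + ω u z • v := by
  apply Complex.ext <;>
    simp only [Complex.areaForm, Complex.real_smul, Complex.add_re, Complex.add_im,
      Complex.mul_re, Complex.mul_im, Complex.ofReal_re, Complex.ofReal_im, Complex.conj_re,
      Complex.conj_im] <;> ring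

theorem IsNorm.exists_auerbach_pair {N : ℂ → ℝ} (hN : IsNorm N) :
    ∃ (u v : ℂ) (f g : ℂ →ₗ[ℝ] ℝ), N u ≤ 1 ∧ N v ≤ 1 ∧ (∀ z, f z • u + g z • v = z) ∧
      (∀ z, |f z| ≤ N z) ∧ (∀ z, |g z| ≤ N z) := by
  have hB := hN.isCompact_le_one
  have hcont : Continuous fun p : ℂ × ℂ => |ω p.1 p.2| := by
    simp only [Complex.areaForm]
    fun_prop
  obtain ⟨⟨u, v⟩, ⟨hu, hv⟩, hmax⟩ := (hB.prod hB).exists_isMaxOn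
    ⟨(0, 0), by simp [hN.map_zero]⟩ hcont.continuousOn
  have hmax' : ∀ x y, N x ≤ 1 → N y ≤ 1 → |ω x y| ≤ |ω u v| := fun x y hx hy =>
    hmax (mk_mem_prod hx hy)
  have hd : ω u v ≠ 0 := by
    intro h
    have := hmax' _ _ (hN.map_inv_smul_self one_ne_zero).le
      (hN.map_inv_smul_self Complex.I_ne_zero).le
    have h1I : ω 1 Complex.I = 1 := by simp [Complex.areaForm]
    rw [h, abs_zero, map_smul, map_smul, LinearMap.smul_apply, h1I, smul_eq_mul, smul_eq_mul,
      mul_one, abs_nonpos_iff] at this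
    exact (mul_pos (inv_pos.2 (hN.pos Complex.I_ne_zero)) (inv_pos.2 (hN.pos one_ne_zero))).ne' this
  refine ⟨u, v, (ω u v)⁻¹ • LinearMap.flip ω v, (ω u v)⁻¹ • ω u, hu, hv, fun z => ?_, fun z => ?_,
    fun z => ?_⟩
  · simp only [LinearMap.smul_apply, LinearMap.flip_apply, smul_eq_mul, mul_smul, ← smul_add,
      ← Complex.areaForm_smul_eq_add, inv_smul_smul₀ hd]
  · rw [LinearMap.smul_apply, smul_eq_mul, abs_mul, abs_inv, inv_mul_le_iff₀ (abs_pos.2 hd)]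
    exact hN.abs_le_mul (LinearMap.flip ω v) (fun y hy => hmax' y v hy hv) z
  · rw [LinearMap.smul_apply, smul_eq_mul, abs_mul, abs_inv, inv_mul_le_iff₀ (abs_pos.2 hd)]
    exact hN.abs_le_mul (ω u) (fun y hy => hmax' u y hu hy) z

section ConvexLine

variable {E : Type*} [AddCommGroup E] [Module ℝ E] [TopologicalSpace E]
  [IsTopologicalAddGroup E] [ContinuousSMul ℝ E] {s : Set E} {x : E}

theorem Convex.subsingleton_frontier_ray (hs : Convex ℝ s) (hx : x ∈ interior s) (w : E) :
    {t : ℝ | 0 < t ∧ x + t • w ∈ frontier s}.Subsingleton := by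
  suffices h : ∀ a b : ℝ, 0 < a → a < b → x + b • w ∈ closure s → x + a • w ∈ interior s by
    rintro a ⟨ha, ha'⟩ b ⟨hb, hb'⟩
    by_contra hab
    rcases lt_or_gt_of_ne hab with hlt | hlt
    · exact ha'.2 (h a b ha hlt hb'.1)
    · exact hb'.2 (h b a hb hlt ha'.1)
  intro a b ha hab hb
  have hb0 : 0 < b := ha.trans hab
  have key := hs.add_smul_sub_mem_interior' hb hx (t := 1 - a / b)
    ⟨by rw [sub_pos, div_lt_one hb0]; exact hab, by linarith [div_pos ha hb0]⟩
  convert key using 1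
  rw [sub_add_cancel_left, smul_neg, smul_smul, add_assoc, ← sub_eq_add_neg, ← sub_smul]
  congr 2
  field_simp
  ring

theorem Convex.encard_frontier_line_le_two (hs : Convex ℝ s) (hx : x ∈ interior s) (w : E) :
    {t : ℝ | x + t • w ∈ frontier s}.encard ≤ 2 := by
  have hneg : {t : ℝ | t < 0 ∧ x + t • w ∈ frontier s}.Subsingleton := by
    rintro a ⟨ha, ha'⟩ b ⟨hb, hb'⟩
    exact neg_inj.1 <| hs.subsingleton_frontier_ray hx (-w)
      ⟨neg_pos.2 ha, by simpa using ha'⟩ ⟨neg_pos.2 hb, by simpa using hb'⟩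
  have hsub : {t : ℝ | x + t • w ∈ frontier s} ⊆
      {t | t < 0 ∧ x + t • w ∈ frontier s} ∪ {t | 0 < t ∧ x + t • w ∈ frontier s} := by
    intro t ht
    rcases lt_trichotomy t 0 with h | rfl | h
    · exact Or.inl ⟨h, ht⟩
    · exact absurd hx (by simpa using ht.2)
    · exact Or.inr ⟨h, ht⟩
  calc _ ≤ _ := encard_le_encard hsub
    _ ≤ _ := encard_union_le _ _
    _ ≤ 1 + 1 := add_le_add (encard_le_one_iff_subsingleton.2 hneg)
      (encard_le_one_iff_subsingleton.2 (hs.subsingleton_frontier_ray hx w))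
    _ = 2 := one_add_one_eq_two

end ConvexLine

theorem IsBoundaryParam.mem_frontier {B : Set ℂ} {φ : ℝ → ℂ} (hφ : IsBoundaryParam B φ)
    {s : ℝ} (hs : s ∈ Icc 0 1) : φ s ∈ frontier B := by
  rw [← hφ.2.2.2]
  rcases hs.2.lt_or_eq with h | rfl
  · exact mem_image_of_mem φ ⟨hs.1, h⟩
  · rw [show φ 1 = φ 0 by simpa using hφ.2.1 0]
    exact mem_image_of_mem φ (left_mem_Ico.2 zero_lt_one)

theorem IsBoundaryParam.encard_level_le_two {B : Set ℂ} {φ : ℝ → ℂ} (hB : Convex ℝ B)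
    (hφ : IsBoundaryParam B φ) {f g : ℂ → ℝ} {x w : ℂ} {c : ℝ} (hx : x ∈ interior B)
    (hline : ∀ z, f z = c → z = x + g z • w) :
    {s ∈ Ioo (0 : ℝ) 1 | f (φ s) = c}.encard ≤ 2 := by
  refine (encard_le_encard_of_injOn (f := g ∘ φ) ?_ ?_).trans
    (hB.encard_frontier_line_le_two hx w)
  · rintro s ⟨hs, hsc⟩
    show x + g (φ s) • w ∈ frontier B
    rw [← hline _ hsc]
    exact hφ.mem_frontier (Ioo_subset_Icc_self hs)
  · rintro s ⟨hs, hsc⟩ s' ⟨hs', hs'c⟩ h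
    refine hφ.2.2.1 (Ioo_subset_Ico_self hs) (Ioo_subset_Ico_self hs') ?_
    rw [hline _ hsc, hline _ hs'c, show g (φ s) = g (φ s') from h]

section PathLength

variable {E : Type*} [AddCommGroup E] [Module ℝ E] {N : E → ℝ} {φ : ℝ → E} {a b : ℝ}

theorem pathLen_le {C : ENNReal}
    (h : ∀ (n : ℕ) (t : Fin (n + 1) → ℝ), Monotone t → t 0 = a → t (Fin.last n) = b →
      ∑ i : Fin n, ENNReal.ofReal (N (φ (t i.succ) - φ (t i.castSucc))) ≤ C) :
    pathLen N φ a b ≤ C :=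
  iSup_le fun n => iSup₂_le fun t ht => iSup₂_le fun h0 hn => h n t ht h0 hn

theorem sum_le_pathLen {n : ℕ} {t : Fin (n + 1) → ℝ} (ht : Monotone t) (h0 : t 0 = a)
    (hn : t (Fin.last n) = b) :
    ∑ i : Fin n, ENNReal.ofReal (N (φ (t i.succ) - φ (t i.castSucc))) ≤ pathLen N φ a b :=
  le_iSup_of_le n <| le_iSup₂_of_le t ht <| le_iSup₂_of_le h0 hn le_rfl

theorem pathLen_le_add {F G : Type*} [AddCommGroup F] [Module ℝ F] [AddCommGroup G] [Module ℝ G]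
    {N₁ : F → ℝ} {N₂ : G → ℝ} {ψ₁ : ℝ → F} {ψ₂ : ℝ → G}
    (h : ∀ x y, N (φ y - φ x) ≤ N₁ (ψ₁ y - ψ₁ x) + N₂ (ψ₂ y - ψ₂ x)) :
    pathLen N φ a b ≤ pathLen N₁ ψ₁ a b + pathLen N₂ ψ₂ a b := by
  refine pathLen_le fun n t ht h0 hn => ?_
  calc _ ≤ ∑ i : Fin n, (ENNReal.ofReal (N₁ (ψ₁ (t i.succ) - ψ₁ (t i.castSucc))) +
        ENNReal.ofReal (N₂ (ψ₂ (t i.succ) - ψ₂ (t i.castSucc)))) :=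
        Finset.sum_le_sum fun i _ => (ENNReal.ofReal_le_ofReal (h _ _)).trans ENNReal.ofReal_add_le
    _ = _ := Finset.sum_add_distrib
    _ ≤ _ := add_le_add (sum_le_pathLen ht h0 hn) (sum_le_pathLen ht h0 hn)

end PathLength

theorem Monotone.eq_of_mem_Ioo_succ {β : Type*} [Preorder β] {n : ℕ} {t : Fin (n + 1) → β}
    (ht : Monotone t) {i j : Fin n} {x : β} (hi : x ∈ Ioo (t i.castSucc) (t i.succ))
    (hj : x ∈ Ioo (t j.castSucc) (t j.succ)) : i = j := by
  by_contra hij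
  rcases lt_or_gt_of_ne hij with h | h
  · exact lt_irrefl x ((hi.2.trans_le (ht (Fin.succ_le_castSucc_iff.2 h))).trans hj.1)
  · exact lt_irrefl x ((hj.2.trans_le (ht (Fin.succ_le_castSucc_iff.2 h))).trans hi.1)

section IntermediateValue

variable {α δ : Type*} [ConditionallyCompleteLinearOrder α] [TopologicalSpace α] [OrderTopology α]
  [DenselyOrdered α] [LinearOrder δ] [TopologicalSpace δ] [OrderClosedTopology δ]

theorem exists_mem_Ioo_eq_of_mem_uIoo {f : α → δ} {a b : α} {c : δ} (hab : a ≤ b)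
    (hf : ContinuousOn f (Icc a b)) (hc : c ∈ uIoo (f a) (f b)) : ∃ s ∈ Ioo a b, f s = c := by
  rcases le_total (f a) (f b) with h | h
  · rw [uIoo_of_le h] at hc
    exact intermediate_value_Ioo hab hf hc
  · rw [uIoo_of_ge h] at hc
    exact intermediate_value_Ioo' hab hf hc

open Classical in
/-- By the intermediate value theorem, each piece of the partition whose image interval contains
`c` crosses the level `c` in its interior, and distinct pieces have disjoint interiors. -/
theorem card_crossings_le_encard {ψ : α → δ} {a b : α} (hψ : ContinuousOn ψ (Icc a b))
    {n : ℕ} {t : Fin (n + 1) → α} (ht : Monotone t) (h0 : t 0 = a) (hn : t (Fin.last n) = b)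
    (c : δ) :
    ((Finset.univ.filter fun i : Fin n => c ∈ uIoo (ψ (t i.castSucc)) (ψ (t i.succ))).card : ℕ∞)
      ≤ {s ∈ Ioo a b | ψ s = c}.encard := by
  have hmem : ∀ i, t i ∈ Icc a b := fun i => ⟨h0 ▸ ht (Fin.zero_le i), hn ▸ ht (Fin.le_last i)⟩
  have hcross : ∀ i : Fin n, c ∈ uIoo (ψ (t i.castSucc)) (ψ (t i.succ)) →
      ∃ s ∈ Ioo (t i.castSucc) (t i.succ), ψ s = c := fun i hi =>
    exists_mem_Ioo_eq_of_mem_uIoo (ht (Fin.castSucc_le_succ i))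
      (hψ.mono (Icc_subset_Icc (hmem _).1 (hmem _).2)) hi
  choose! s hs hsc using hcross
  rw [← encard_coe_eq_coe_finsetCard]
  refine encard_le_encard_of_injOn (f := s) (fun i hi => ?_) (fun i hi j hj hij => ?_)
  · simp only [Finset.coe_filter, Finset.mem_univ, true_and] at hi
    exact ⟨⟨(hmem _).1.trans_lt (hs i hi).1, (hs i hi).2.trans_le (hmem _).2⟩, hsc i hi⟩
  · simp only [Finset.coe_filter, Finset.mem_univ, true_and] at hi hj
    exact ht.eq_of_mem_Ioo_succ (hs i hi) (hij ▸ hs j hj)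

end IntermediateValue

open Classical in
/-- Banach's indicatrix bound: the variation of `ψ` over each piece of a partition is the
measure of the interval of levels it crosses, and each level is crossed at most `k` times. -/
theorem pathLen_abs_le_of_encard_level_le {ψ : ℝ → ℝ} {a b m M : ℝ} {k : ℕ}
    (hψ : ContinuousOn ψ (Icc a b)) (hmaps : MapsTo ψ (Icc a b) (Icc m M))
    (hlevel : ∀ c ∈ Ioo m M, {s ∈ Ioo a b | ψ s = c}.encard ≤ k) :
    pathLen (|·|) ψ a b ≤ k * ENNReal.ofReal (M - m) := by
  refine pathLen_le fun n t ht h0 hn => ?_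
  set A : Fin n → Set ℝ := fun i => uIoo (ψ (t i.castSucc)) (ψ (t i.succ))
  have hAm : ∀ i, MeasurableSet (A i) := fun _ => measurableSet_Ioo
  have hA : ∀ i, A i ⊆ Ioo m M := fun i =>
    have hmem : ∀ j, ψ (t j) ∈ Icc m M := fun j =>
      hmaps ⟨h0 ▸ ht (Fin.zero_le j), hn ▸ ht (Fin.le_last j)⟩
    Ioo_subset_Ioo (le_inf (hmem _).1 (hmem _).1) (sup_le (hmem _).2 (hmem _).2)
  have hcount : ∀ c, ∑ i, (A i).indicator 1 c ≤ (Ioo m M).indicator (fun _ => (k : ENNReal)) c := by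
    intro c
    by_cases hc : c ∈ Ioo m M
    · simp only [indicator_apply, Pi.one_apply, Finset.sum_boole, hc, if_true]
      have := (card_crossings_le_encard hψ ht h0 hn c).trans (hlevel c hc)
      exact_mod_cast this
    · rw [Finset.sum_eq_zero fun i _ => indicator_of_notMem (fun h => hc (hA i h)) _]
      exact zero_le
  calc ∑ i : Fin n, ENNReal.ofReal |ψ (t i.succ) - ψ (t i.castSucc)|
      = ∑ i, ∫⁻ c, (A i).indicator 1 c := by
        refine Finset.sum_congr rfl fun i _ => ?_
        rw [lintegral_indicator_one (hAm i), Real.volume_uIoo]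
    _ = ∫⁻ c, ∑ i, (A i).indicator 1 c :=
        (lintegral_finsetSum _ fun i _ => measurable_one.indicator (hAm i)).symm
    _ ≤ ∫⁻ c, (Ioo m M).indicator (fun _ => (k : ENNReal)) c := lintegral_mono hcount
    _ = k * ENNReal.ofReal (M - m) := by
        rw [lintegral_indicator_const measurableSet_Ioo, Real.volume_Ioo]

theorem IsBoundaryParam.pathLen_abs_coord_le_four {N : ℂ → ℝ} (hN : IsNorm N) {φ : ℝ → ℂ}
    (hφ : IsBoundaryParam {z | N z ≤ 1} φ) {f g : ℂ →ₗ[ℝ] ℝ} {u v : ℂ} (hu : N u ≤ 1)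
    (hrep : ∀ z, f z • u + g z • v = z) (hf : ∀ z, |f z| ≤ N z) :
    pathLen (|·|) (f ∘ φ) 0 1 ≤ 4 := by
  have hcont : ContinuousOn (f ∘ φ) (Icc 0 1) :=
    (f.continuous_of_finiteDimensional.comp hφ.1).continuousOn
  have hmaps : MapsTo (f ∘ φ) (Icc 0 1) (Icc (-1) 1) := fun s hs =>
    abs_le.1 <| (hf _).trans (hN.isClosed_le_one.frontier_subset (hφ.mem_frontier hs))
  -- the level line `f = c` passes through the interior point `c • u`
  have hlevel : ∀ c ∈ Ioo (-1 : ℝ) 1, {s ∈ Ioo (0 : ℝ) 1 | (f ∘ φ) s = c}.encard ≤ (2 : ℕ) :=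
    fun c hc => hφ.encard_level_le_two hN.convex_le_one
      (hN.mem_interior_le_one ((hN.smul_le_abs hu c).trans_lt (abs_lt.2 hc)))
      (fun z hz => hz ▸ (hrep z).symm)
  exact (pathLen_abs_le_of_encard_level_le hcont hmaps hlevel).trans_eq (by norm_num)

/-- For any norm on the plane, the generalized pi-value is at most 4. -/
theorem stmt12 (N : ℂ → ℝ) (hN : IsNorm N) (φ : ℝ → ℂ)
    (hφ : IsBoundaryParam {z : ℂ | N z ≤ 1} φ) :
    pathLen N φ 0 1 / 2 ≤ 4 := by
  obtain ⟨u, v, f, g, hu, hv, hrep, hf, hg⟩ := hN.exists_auerbach_pair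
  have hdiff : ∀ x y, N (φ y - φ x) ≤ |(f ∘ φ) y - (f ∘ φ) x| + |(g ∘ φ) y - (g ∘ φ) x| := by
    intro x y
    simpa only [Function.comp_apply, ← map_sub, hrep] using
      hN.le_abs_add_abs hu hv (f (φ y - φ x)) (g (φ y - φ x))
  have hlen : pathLen N φ 0 1 ≤ 4 * 2 := calc
    pathLen N φ 0 1 ≤ pathLen (|·|) (f ∘ φ) 0 1 + pathLen (|·|) (g ∘ φ) 0 1 :=
      pathLen_le_add hdiff
    _ ≤ 4 + 4 := add_le_add (hφ.pathLen_abs_coord_le_four hN hu hrep hf)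
      (hφ.pathLen_abs_coord_le_four hN hv (fun z => by rw [add_comm, hrep]) hg)
    _ = 4 * 2 := by norm_num
  exact ENNReal.div_le_of_le_mul hlen

end
end

section
/- Let A ⊆ ℝ² be convex and u, v ∈ A distinct with the segment [u,v] contained in ∂A, and let ℓ be the line through u and v. Then A ∩ ℓ is a face of A, i.e., it is nonempty, convex, and whenever x, y ∈ A and the open segment (x,y) meets A ∩ ℓ, both x and y lie in A ∩ ℓ. -/
/-!
If `A` has empty interior, it spans a proper affine subspace of the plane, so it lies on the line
`ℓ` through `u` and `v` and `A ∩ ℓ = A`. Otherwise the midpoint of `[u, v]` is a boundary point, so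
a nonzero functional `f` attains its maximum over `A` there, hence also at `u` and `v`. In the
plane the level set of `f` through `u` is exactly `ℓ`, so `A ∩ ℓ` is the exposed face of `A` on
which `f` is maximal, and exposed faces are faces.
-/

open Set

noncomputable section

open Module

section Collinear

variable {K V : Type*} [Field K] [AddCommGroup V] [Module K V] [FiniteDimensional K V]

theorem collinear_of_vectorSpan_ne_top (hV : finrank K V = 2) {s : Set V}
    (hs : vectorSpan K s ≠ ⊤) : Collinear K s := by
  have := Submodule.finrank_lt hs
  rw [collinear_iff_finrank_le_one]
  omega

theorem LinearMap.collinear_preimage_singleton (hV : finrank K V = 2) {f : V →ₗ[K] K}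
    (hf : f ≠ 0) (c : K) : Collinear K (f ⁻¹' {c}) := by
  refine collinear_of_vectorSpan_ne_top hV fun htop => hf ?_
  have hker : vectorSpan K (f ⁻¹' {c}) ≤ LinearMap.ker f := by
    rw [vectorSpan_def, Submodule.span_le]
    rintro _ ⟨x, hx, y, hy, rfl⟩
    simp_all
  rwa [htop, top_le_iff, LinearMap.ker_eq_top] at hker

end Collinear

theorem setOf_exists_eq_add_smul_sub {K V : Type*} [Ring K] [AddCommGroup V] [Module K V]
    (u v : V) : {p : V | ∃ t : K, p = u + t • (v - u)} = (line[K, u, v] : Set V) := by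
  ext p
  simp only [Set.mem_ofPred_eq, SetLike.mem_coe, mem_affineSpan_pair_iff_exists_lineMap_eq,
    AffineMap.lineMap_apply, vsub_eq_sub, vadd_eq_add, add_comm _ u, eq_comm]

theorem Convex.collinear_of_interior_eq_empty {V : Type*} [NormedAddCommGroup V]
    [NormedSpace ℝ V] [FiniteDimensional ℝ V] (hV : finrank ℝ V = 2) {A : Set V}
    (hA : Convex ℝ A) (hint : interior A = ∅) : Collinear ℝ A := by
  rcases A.eq_empty_or_nonempty with rfl | hne
  · exact collinear_empty ℝ V
  refine collinear_of_vectorSpan_ne_top hV fun htop => ?_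
  rw [← AffineSubspace.affineSpan_eq_top_iff_vectorSpan_eq_top_of_nonempty ℝ V V hne,
    ← hA.interior_nonempty_iff_affineSpan_eq_top, hint] at htop
  exact Set.not_nonempty_empty htop

theorem Convex.exists_forall_le_of_notMem_interior {E : Type*} [TopologicalSpace E]
    [AddCommGroup E] [Module ℝ E] [IsTopologicalAddGroup E] [ContinuousSMul ℝ E] {A : Set E}
    (hA : Convex ℝ A) (hint : (interior A).Nonempty) {m : E}
    (hmi : m ∉ interior A) : ∃ f : StrongDual ℝ E, f ≠ 0 ∧ ∀ a ∈ A, f a ≤ f m := by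
  obtain ⟨f, c, hf, hfA, hfm⟩ := geometric_hahn_banach_of_nonempty_interior hA
    (convex_singleton m) (Set.disjoint_singleton_right.2 hmi) hint (Set.singleton_nonempty m)
  exact ⟨f, hf, fun a ha => (hfA a ha).trans (hfm m rfl)⟩

theorem Convex.isExtreme_inter_affineSpan_pair {V : Type*} [NormedAddCommGroup V]
    [NormedSpace ℝ V] [FiniteDimensional ℝ V] (hV : finrank ℝ V = 2) {A : Set V}
    (hA : Convex ℝ A) {u v : V} (hu : u ∈ A) (hv : v ∈ A) (huv : u ≠ v)
    (hseg : segment ℝ u v ⊆ frontier A) : IsExtreme ℝ A (A ∩ line[ℝ, u, v]) := by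
  rcases (interior A).eq_empty_or_nonempty with hint | hint
  · have hAl : A ⊆ line[ℝ, u, v] := fun x hx =>
      (hA.collinear_of_interior_eq_empty hV hint).mem_affineSpan_of_mem_of_ne hu hv hx huv
    exact (Set.inter_eq_left.2 hAl).symm ▸ IsExtreme.rfl
  set m := midpoint ℝ u v
  obtain ⟨f, hf, hfA⟩ := hA.exists_forall_le_of_notMem_interior hint
    (hseg (midpoint_mem_segment u v)).2
  have hfm : f m = (f u + f v) / 2 := by
    simp only [m, midpoint_eq_smul_add, map_smul, map_add, smul_eq_mul, invOf_eq_inv]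
    ring
  have hfu : f u = f m := by linarith [hfA u hu, hfA v hv]
  have hfv : f v = f m := by linarith [hfA u hu, hfA v hv]
  refine IsExposed.isExtreme fun _ => ⟨f, Set.ext fun x => ⟨?_, ?_⟩⟩
  · rintro ⟨hx, hxl⟩
    obtain ⟨r, rfl⟩ := mem_affineSpan_pair_iff_exists_lineMap_eq.1 hxl
    have : f (AffineMap.lineMap u v r) = f m := by
      simp [AffineMap.lineMap_apply, hfu, hfv]
    exact ⟨hx, fun y hy => this ▸ hfA y hy⟩
  · rintro ⟨hx, hxmax⟩
    have hfx : f x = f m := le_antisymm (hfA x hx) (hfu ▸ hxmax u hu)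
    have hcol := (f : V →ₗ[ℝ] ℝ).collinear_preimage_singleton hV (by exact_mod_cast hf) (f m)
    exact ⟨hx, hcol.mem_affineSpan_of_mem_of_ne hfu hfv hfx huv⟩

/-- If a segment `[u, v]` with `u ≠ v` lies in the boundary of a convex set `A`,
then the intersection of `A` with the line through `u` and `v` is a face of `A`. -/
theorem stmt14 (A : Set ℂ) (hA : Convex ℝ A) (u v : ℂ) (hu : u ∈ A) (hv : v ∈ A)
    (huv : u ≠ v) (hseg : segment ℝ u v ⊆ frontier A) :
    (A ∩ {p : ℂ | ∃ t : ℝ, p = u + t • (v - u)}).Nonempty ∧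
    Convex ℝ (A ∩ {p : ℂ | ∃ t : ℝ, p = u + t • (v - u)}) ∧
    ∀ x ∈ A, ∀ y ∈ A,
      (openSegment ℝ x y ∩ (A ∩ {p : ℂ | ∃ t : ℝ, p = u + t • (v - u)})).Nonempty →
        x ∈ A ∩ {p : ℂ | ∃ t : ℝ, p = u + t • (v - u)} ∧
        y ∈ A ∩ {p : ℂ | ∃ t : ℝ, p = u + t • (v - u)} := by
  rw [setOf_exists_eq_add_smul_sub]
  have hface := hA.isExtreme_inter_affineSpan_pair Complex.finrank_real_complex hu hv huv hseg
  refine ⟨⟨u, hu, left_mem_affineSpan_pair ℝ u v⟩, hA.inter (AffineSubspace.convex _), ?_⟩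
  rintro x hx y hy ⟨z, hzxy, hz⟩
  exact ⟨hface.left_mem_of_mem_openSegment hx hy hz hzxy,
    hface.right_mem_of_mem_openSegment hx hy hz hzxy⟩

end
end
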